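/- arXiv:1708.07092 — 3 statements merged into one kernel-verified Lean document; each statement's English description precedes it below -/
import Mathlib

section
/- Let G=(V,E) be a finite connected weighted graph with symmetric positive edge weights ω and positive vertex measure μ, let h, f : V → ℝ satisfy h ≤ 0 with min_{i∈V}(-h_i) > 0 and f > 0, let λ ∈ ℝ, and assume 1 ≤ α ≤ p ≤ q. Then for every u : V → ℝ with u ≥ 0 and (1/q)·∫_V h·u^q dμ = -1, the energy functional E(u) = (1/p)·∫_V|∇u|^p dμ - (λ/α)·∫_V f·u^α dμ satisfies E(u) ≥ -(|λ|/α)·f_M·(q/(-h)_m)^{α/q}·Vol(G)^{1-α/q}, where f_M = max_{i∈V} f_i, (-h)_m = min_{i∈V}(-h_i), and Vol(G) = ∫_V dμ. In particular E is bounded below on this constraint set. -/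
open Finset

/-- `∫_V u dμ = Σ_{i∈V} μ_i u_i`. -/
noncomputable def vInt {V : Type*} [Fintype V] (m : V → ℝ) (u : V → ℝ) : ℝ :=
  ∑ i, m i * u i

/-- `∫_V |∇u|^p dμ = Σ_{i∼j} ω_{ij}|u_j - u_i|^p` (the sum over unordered edges,
written as half of the sum over ordered adjacent pairs, using symmetry of `ω`). -/
noncomputable def gradEnergy {V : Type*} [Fintype V] (G : SimpleGraph V) [DecidableRel G.Adj]
    (w : V → V → ℝ) (p : ℝ) (u : V → ℝ) : ℝ :=
  (1 / 2) * ∑ i, ∑ j ∈ G.neighborFinset i, w i j * |u j - u i| ^ p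

/-- The energy functional `E(u) = (1/p)∫_V |∇u|^p dμ - (λ/α)∫_V f u^α dμ`. -/
noncomputable def energyE {V : Type*} [Fintype V] (G : SimpleGraph V) [DecidableRel G.Adj]
    (w : V → V → ℝ) (m : V → ℝ) (p α lam : ℝ) (f : V → ℝ) (u : V → ℝ) : ℝ :=
  (1 / p) * gradEnergy G w p u - (lam / α) * vInt m (fun i => f i * u i ^ α)

/-- On the constraint set `(1/q)∫_V h u^q dμ = -1`, `u ≥ 0`, the energy functional
is bounded below: `E(u) ≥ -(|λ|/α)·f_M·(q/(-h)_m)^{α/q}·Vol(G)^{1-α/q}`. -/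
theorem energy_bounded_below
    {V : Type*} [Fintype V] [Nonempty V]
    (G : SimpleGraph V) [DecidableRel G.Adj] (hconn : G.Connected)
    (w : V → V → ℝ) (hwsymm : ∀ i j, w i j = w j i)
    (hwpos : ∀ i j, G.Adj i j → 0 < w i j)
    (m : V → ℝ) (hm : ∀ i, 0 < m i)
    (h f : V → ℝ) (hh : ∀ i, h i ≤ 0)
    (hhm : 0 < Finset.univ.inf' Finset.univ_nonempty (fun i => -h i))
    (hf : ∀ i, 0 < f i)
    (lam : ℝ)
    (α p q : ℝ) (hα : 1 ≤ α) (hαp : α ≤ p) (hpq : p ≤ q)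
    (u : V → ℝ) (hu : ∀ i, 0 ≤ u i)
    (hcon : (1 / q) * vInt m (fun i => h i * u i ^ q) = -1) :
    energyE G w m p α lam f u
      ≥ -(|lam| / α) * (Finset.univ.sup' Finset.univ_nonempty f)
          * (q / Finset.univ.inf' Finset.univ_nonempty (fun i => -h i)) ^ (α / q)
          * (∑ i, m i) ^ (1 - α / q) := by
  classical
  set hm0 : ℝ := Finset.univ.inf' Finset.univ_nonempty (fun i => -h i) with hhm0
  set fM : ℝ := Finset.univ.sup' Finset.univ_nonempty f with hfM
  set W : ℝ := ∑ i, m i with hW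
  have hq1 : 1 ≤ q := le_trans (le_trans hα hαp) hpq
  have hq0 : (0:ℝ) < q := by linarith
  have hα0 : (0:ℝ) < α := by linarith
  have hp0 : (0:ℝ) < p := by linarith
  have hWpos : 0 < W := Finset.sum_pos (fun i _ => hm i) Finset.univ_nonempty
  have hfMpos : 0 < fM := lt_of_lt_of_le (hf (Classical.arbitrary V))
    (Finset.le_sup' f (Finset.mem_univ _))
  -- nonnegativity of gradient energy
  have hgrad : 0 ≤ gradEnergy G w p u := by
    unfold gradEnergy
    have : (0:ℝ) ≤ ∑ i, ∑ j ∈ G.neighborFinset i, w i j * |u j - u i| ^ p := by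
      apply Finset.sum_nonneg; intro i _
      apply Finset.sum_nonneg; intro j hj
      have hadj : G.Adj i j := (SimpleGraph.mem_neighborFinset G i j).1 hj
      exact mul_nonneg (hwpos i j hadj).le (Real.rpow_nonneg (abs_nonneg _) p)
    linarith
  -- the constraint gives ∑ m i * u i ^ q ≤ q / hm0
  have hBq : ∑ i, m i * ((-h i) * u i ^ q) = q := by
    have hv : ∑ i, m i * (h i * u i ^ q) = -q := by
      have h1 : (1 / q) * ∑ i, m i * (h i * u i ^ q) = -1 := hcon
      have hq : q ≠ 0 := ne_of_gt hq0
      field_simp at h1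
      rw [← h1]; apply Finset.sum_congr rfl; intros; ring
    calc ∑ i, m i * ((-h i) * u i ^ q) = -∑ i, m i * (h i * u i ^ q) := by
          rw [← Finset.sum_neg_distrib]; apply Finset.sum_congr rfl; intros; ring
      _ = q := by rw [hv]; ring
  set B : ℝ := ∑ i, m i * u i ^ q with hB
  have hBnonneg : 0 ≤ B := Finset.sum_nonneg fun i _ =>
    mul_nonneg (hm i).le (Real.rpow_nonneg (hu i) q)
  have hBle : B ≤ q / hm0 := by
    rw [le_div_iff₀ hhm]
    calc B * hm0 = ∑ i, m i * (hm0 * u i ^ q) := by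
          rw [hB, Finset.sum_mul]; apply Finset.sum_congr rfl; intros; ring
      _ ≤ ∑ i, m i * ((-h i) * u i ^ q) := by
          apply Finset.sum_le_sum; intro i _
          have h1 : hm0 ≤ -h i := Finset.inf'_le _ (Finset.mem_univ i)
          have h2 := mul_le_mul_of_nonneg_right h1 (Real.rpow_nonneg (hu i) q)
          exact mul_le_mul_of_nonneg_left h2 (hm i).le
      _ = q := hBq
  -- Jensen: A ≤ B^(α/q) * W^(1-α/q)
  set A : ℝ := ∑ i, m i * u i ^ α with hA
  have hAnonneg : 0 ≤ A := Finset.sum_nonneg fun i _ =>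
    mul_nonneg (hm i).le (Real.rpow_nonneg (hu i) α)
  have hjensen : A / W ≤ (B / W) ^ (α / q) := by
    have hr : 1 ≤ q / α := (one_le_div hα0).2 (le_trans hαp hpq)
    have key := Real.rpow_arith_mean_le_arith_mean_rpow Finset.univ
      (fun i => m i / W) (fun i => u i ^ α)
      (fun i _ => div_nonneg (hm i).le hWpos.le)
      (by rw [← Finset.sum_div, ← hW, div_self hWpos.ne'])
      (fun i _ => Real.rpow_nonneg (hu i) α) hr
    have hz : ∀ i : V, (u i ^ α) ^ (q / α) = u i ^ q := by
      intro i
      rw [← Real.rpow_mul (hu i)]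
      congr 1
      field_simp
    have hL : ∑ i, m i / W * u i ^ α = A / W := by
      rw [hA, Finset.sum_div]; apply Finset.sum_congr rfl; intros; ring
    have hR : ∑ i, m i / W * (u i ^ α) ^ (q / α) = B / W := by
      rw [hB, Finset.sum_div]; apply Finset.sum_congr rfl; intro i _
      rw [hz i]; ring
    rw [hL, hR] at key
    have hAW : 0 ≤ A / W := div_nonneg hAnonneg hWpos.le
    have := Real.rpow_le_rpow (Real.rpow_nonneg hAW (q / α)) key
      (div_nonneg hα0.le hq0.le)
    rwa [← Real.rpow_mul hAW, div_mul_div_comm, mul_comm q α, div_self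
      (by positivity : α * q ≠ 0), Real.rpow_one] at this
  have hAle : A ≤ B ^ (α / q) * W ^ (1 - α / q) := by
    have h1 : A ≤ W * (B / W) ^ (α / q) := by
      rw [← div_le_iff₀' hWpos] at *
      exact hjensen
    calc A ≤ W * (B / W) ^ (α / q) := h1
      _ = B ^ (α / q) * W ^ (1 - α / q) := by
          rw [Real.div_rpow hBnonneg hWpos.le, Real.rpow_sub hWpos, Real.rpow_one]
          field_simp
  have hAle2 : A ≤ (q / hm0) ^ (α / q) * W ^ (1 - α / q) := by
    refine le_trans hAle (mul_le_mul_of_nonneg_right ?_ (Real.rpow_nonneg hWpos.le _))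
    exact Real.rpow_le_rpow hBnonneg hBle (div_nonneg hα0.le hq0.le)
  -- bound the f-term
  set X : ℝ := vInt m (fun i => f i * u i ^ α) with hX
  have hXnonneg : 0 ≤ X := Finset.sum_nonneg fun i _ =>
    mul_nonneg (hm i).le (mul_nonneg (hf i).le (Real.rpow_nonneg (hu i) α))
  have hXle : X ≤ fM * A := by
    rw [hX, hA, vInt, Finset.mul_sum]
    apply Finset.sum_le_sum; intro i _
    have h1 : f i ≤ fM := Finset.le_sup' f (Finset.mem_univ i)
    have h2 : 0 ≤ u i ^ α := Real.rpow_nonneg (hu i) α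
    calc m i * (f i * u i ^ α) = f i * (m i * u i ^ α) := by ring
      _ ≤ fM * (m i * u i ^ α) := mul_le_mul_of_nonneg_right h1 (mul_nonneg (hm i).le h2)
  set C : ℝ := fM * ((q / hm0) ^ (α / q) * W ^ (1 - α / q)) with hC
  have hXC : X ≤ C := le_trans hXle (mul_le_mul_of_nonneg_left hAle2 hfMpos.le)
  -- conclude
  have hlam : lam ≤ |lam| := le_abs_self lam
  have h1 : -(lam / α) * X ≥ -(|lam| / α) * X := by
    have hd : lam / α ≤ |lam| / α := by gcongr
    exact mul_le_mul_of_nonneg_right (neg_le_neg hd) hXnonneg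
  have h2 : -(|lam| / α) * X ≥ -(|lam| / α) * C := by
    have hge : 0 ≤ |lam| / α := div_nonneg (abs_nonneg lam) hα0.le
    nlinarith
  have h3 : (0:ℝ) ≤ (1 / p) * gradEnergy G w p u :=
    mul_nonneg (by positivity) hgrad
  have : energyE G w m p α lam f u ≥ -(|lam| / α) * C := by
    unfold energyE
    rw [← hX]
    linarith
  calc energyE G w m p α lam f u ≥ -(|lam| / α) * C := this
    _ = -(|lam| / α) * fM * (q / hm0) ^ (α / q) * W ^ (1 - α / q) := by rw [hC]; ring
end

section
/- Let G=(V,E) be a finite connected weighted graph with symmetric positive edge weights ω and positive vertex measure μ, let h, f : V → ℝ satisfy h ≤ 0 with min_{i∈V}(-h_i) > 0 and f > 0, let λ, β ∈ ℝ, and assume 1 ≤ α ≤ p ≤ q. If u : V → ℝ satisfies u ≥ 0, (1/q)·∫_V h·u^q dμ = -1, and E(u) ≤ 1 + β where E(u) = (1/p)·∫_V|∇u|^p dμ - (λ/α)·∫_V f·u^α dμ, then ∫_V|∇u|^p dμ + ∫_V|u|^p dμ ≤ p(1+β) + (p|λ|·f_M/α)·(q/(-h)_m)^{α/q}·Vol(G)^{1-α/q}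 + (q/(-h)_m)^{p/q}·Vol(G)^{1-p/q}, where f_M = max_{i∈V} f_i and (-h)_m = min_{i∈V}(-h_i). -/
open Finset

/-- Auxiliary Hölder-type bound: if `∑ m u^q ≤ C` then
`∑ m u^s ≤ C^(s/q) * (∑ m)^(1 - s/q)` for `1 ≤ s ≤ q`. -/
lemma key_holder_bound {V : Type*} [Fintype V] (m u : V → ℝ)
    (hm : ∀ i, 0 ≤ m i) (hu : ∀ i, 0 ≤ u i)
    {s q C : ℝ} (hs : 1 ≤ s) (hsq : s ≤ q) (hC : 0 ≤ C)
    (hSq : ∑ i, m i * u i ^ q ≤ C) :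
    ∑ i, m i * u i ^ s ≤ C ^ (s / q) * (∑ i, m i) ^ (1 - s / q) := by
  have hs0 : (0:ℝ) < s := lt_of_lt_of_le one_pos hs
  have hq0 : (0:ℝ) < q := lt_of_lt_of_le hs0 hsq
  have hqs : (1:ℝ) ≤ q / s := (one_le_div hs0).mpr hsq
  have H := Real.inner_le_weight_mul_Lp_of_nonneg Finset.univ hqs m (fun i => u i ^ s)
    (fun i => hm i) (fun i => Real.rpow_nonneg (hu i) s)
  have hinv : (q / s)⁻¹ = s / q := by rw [inv_div]
  have heq : ∀ i, (u i ^ s) ^ (q / s) = u i ^ q := by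
    intro i
    rw [← Real.rpow_mul (hu i)]
    congr 1
    field_simp
  simp only [heq, hinv] at H
  have hsum0 : 0 ≤ ∑ i, m i * u i ^ q :=
    Finset.sum_nonneg fun i _ => mul_nonneg (hm i) (Real.rpow_nonneg (hu i) q)
  have hV0 : 0 ≤ (∑ i, m i) ^ (1 - s / q) :=
    Real.rpow_nonneg (Finset.sum_nonneg fun i _ => hm i) _
  calc ∑ i, m i * u i ^ s
      ≤ (∑ i, m i) ^ (1 - s / q) * (∑ i, m i * u i ^ q) ^ (s / q) := H
    _ ≤ (∑ i, m i) ^ (1 - s / q) * C ^ (s / q) := by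
        apply mul_le_mul_of_nonneg_left _ hV0
        exact Real.rpow_le_rpow hsum0 hSq (div_nonneg hs0.le hq0.le)
    _ = C ^ (s / q) * (∑ i, m i) ^ (1 - s / q) := mul_comm _ _

/-- If `u ≥ 0` lies in the constraint set `(1/q)∫_V h u^q dμ = -1` and `E(u) ≤ 1 + β`,
then `∫_V|∇u|^p dμ + ∫_V|u|^p dμ` is bounded by an explicit constant. -/
theorem sobolev_norm_bound_for_minimizing_sequence
    {V : Type*} [Fintype V] [Nonempty V]
    (G : SimpleGraph V) [DecidableRel G.Adj] (hconn : G.Connected)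
    (w : V → V → ℝ) (hwsymm : ∀ i j, w i j = w j i)
    (hwpos : ∀ i j, G.Adj i j → 0 < w i j)
    (m : V → ℝ) (hm : ∀ i, 0 < m i)
    (h f : V → ℝ) (hh : ∀ i, h i ≤ 0)
    (hhm : 0 < Finset.univ.inf' Finset.univ_nonempty (fun i => -h i))
    (hf : ∀ i, 0 < f i)
    (lam β : ℝ)
    (α p q : ℝ) (hα : 1 ≤ α) (hαp : α ≤ p) (hpq : p ≤ q)
    (u : V → ℝ) (hu : ∀ i, 0 ≤ u i)
    (hcon : (1 / q) * vInt m (fun i => h i * u i ^ q) = -1)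
    (hE : energyE G w m p α lam f u ≤ 1 + β) :
    gradEnergy G w p u + ∑ i, m i * |u i| ^ p
      ≤ p * (1 + β)
        + (p * |lam| * (Finset.univ.sup' Finset.univ_nonempty f) / α)
            * (q / Finset.univ.inf' Finset.univ_nonempty (fun i => -h i)) ^ (α / q)
            * (∑ i, m i) ^ (1 - α / q)
        + (q / Finset.univ.inf' Finset.univ_nonempty (fun i => -h i)) ^ (p / q)
            * (∑ i, m i) ^ (1 - p / q) := by
  set hm' := Finset.univ.inf' Finset.univ_nonempty (fun i => -h i) with hhm'
  set fM := Finset.univ.sup' Finset.univ_nonempty f with hfM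
  have hp1 : (1:ℝ) ≤ p := le_trans hα hαp
  have hp0 : (0:ℝ) < p := lt_of_lt_of_le one_pos hp1
  have hq1 : (1:ℝ) ≤ q := le_trans hp1 hpq
  have hq0 : (0:ℝ) < q := lt_of_lt_of_le one_pos hq1
  have hα0 : (0:ℝ) < α := lt_of_lt_of_le one_pos hα
  have hC0 : (0:ℝ) ≤ q / hm' := div_nonneg hq0.le hhm.le
  -- Step 1: from the constraint, ∑ m u^q ≤ q / hm'
  have hSq : ∑ i, m i * u i ^ q ≤ q / hm' := by
    have h1 : ∑ i, m i * (h i * u i ^ q) = -q := by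
      unfold vInt at hcon
      have hq' : q ≠ 0 := hq0.ne'
      field_simp at hcon
      simp only [mul_assoc] at hcon
      linarith
    have h2 : ∑ i, m i * (hm' * u i ^ q) ≤ ∑ i, m i * (-h i * u i ^ q) := by
      apply Finset.sum_le_sum
      intro i _
      apply mul_le_mul_of_nonneg_left _ (hm i).le
      apply mul_le_mul_of_nonneg_right _ (Real.rpow_nonneg (hu i) q)
      exact Finset.inf'_le (fun i => -h i) (Finset.mem_univ i)
    have h3 : ∑ i, m i * (-h i * u i ^ q) = q := by
      have : ∑ i, m i * (-h i * u i ^ q) = -∑ i, m i * (h i * u i ^ q) := by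
        rw [← Finset.sum_neg_distrib]
        congr 1; funext i; ring
      rw [this, h1, neg_neg]
    have h4 : hm' * ∑ i, m i * u i ^ q ≤ q := by
      rw [Finset.mul_sum]
      calc ∑ i, hm' * (m i * u i ^ q) = ∑ i, m i * (hm' * u i ^ q) := by
            congr 1; funext i; ring
        _ ≤ ∑ i, m i * (-h i * u i ^ q) := h2
        _ = q := h3
    rw [le_div_iff₀ hhm, mul_comm]
    exact h4
  -- Hölder bounds for exponents α and p
  have hBα : ∑ i, m i * u i ^ α ≤ (q / hm') ^ (α / q) * (∑ i, m i) ^ (1 - α / q) :=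
    key_holder_bound m u (fun i => (hm i).le) hu hα (le_trans hαp hpq) hC0 hSq
  have hBp : ∑ i, m i * u i ^ p ≤ (q / hm') ^ (p / q) * (∑ i, m i) ^ (1 - p / q) :=
    key_holder_bound m u (fun i => (hm i).le) hu hp1 hpq hC0 hSq
  -- Step 2: bound on the nonlinear term
  set T := vInt m (fun i => f i * u i ^ α) with hT
  have hT0 : 0 ≤ T := by
    apply Finset.sum_nonneg
    intro i _
    exact mul_nonneg (hm i).le (mul_nonneg (hf i).le (Real.rpow_nonneg (hu i) α))
  have hfM0 : 0 ≤ fM := le_trans (hf (Classical.arbitrary V)).le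
    (Finset.le_sup' f (Finset.mem_univ _))
  have hTf : T ≤ fM * ∑ i, m i * u i ^ α := by
    rw [Finset.mul_sum]
    apply Finset.sum_le_sum
    intro i _
    calc m i * (f i * u i ^ α) = f i * (m i * u i ^ α) := by ring
      _ ≤ fM * (m i * u i ^ α) := by
          apply mul_le_mul_of_nonneg_right (Finset.le_sup' f (Finset.mem_univ i))
          exact mul_nonneg (hm i).le (Real.rpow_nonneg (hu i) α)
  have hlamT : lam * T ≤ |lam| * (fM * ((q / hm') ^ (α / q) * (∑ i, m i) ^ (1 - α / q))) := by
    calc lam * T ≤ |lam| * T := mul_le_mul_of_nonneg_right (le_abs_self lam) hT0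
      _ ≤ |lam| * (fM * ((q / hm') ^ (α / q) * (∑ i, m i) ^ (1 - α / q))) := by
          apply mul_le_mul_of_nonneg_left _ (abs_nonneg lam)
          exact hTf.trans (mul_le_mul_of_nonneg_left hBα hfM0)
  -- Step 3: bound on the gradient term from the energy bound
  have hgrad : gradEnergy G w p u ≤ p * (1 + β) + (p / α) * (lam * T) := by
    unfold energyE at hE
    have h5 : (1 / p) * gradEnergy G w p u ≤ 1 + β + (lam / α) * T := by linarith
    have h6 : gradEnergy G w p u = p * ((1 / p) * gradEnergy G w p u) := by
      field_simp
    rw [h6]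
    calc p * ((1 / p) * gradEnergy G w p u) ≤ p * (1 + β + (lam / α) * T) :=
          mul_le_mul_of_nonneg_left h5 hp0.le
      _ = p * (1 + β) + (p / α) * (lam * T) := by ring
  -- Step 4: the p-term
  have habs : ∑ i, m i * |u i| ^ p = ∑ i, m i * u i ^ p := by
    congr 1; funext i; rw [abs_of_nonneg (hu i)]
  have hpa : 0 ≤ p / α := div_nonneg hp0.le hα0.le
  have hfin : (p / α) * (lam * T)
      ≤ (p * |lam| * fM / α) * (q / hm') ^ (α / q) * (∑ i, m i) ^ (1 - α / q) := by
    calc (p / α) * (lam * T)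
        ≤ (p / α) * (|lam| * (fM * ((q / hm') ^ (α / q) * (∑ i, m i) ^ (1 - α / q)))) :=
          mul_le_mul_of_nonneg_left hlamT hpa
      _ = (p * |lam| * fM / α) * (q / hm') ^ (α / q) * (∑ i, m i) ^ (1 - α / q) := by
          ring
  rw [habs]
  linarith [hgrad, hfin, hBp]
end

section
/- Let G=(V,E) be a finite connected weighted graph with symmetric positive edge weights ω and positive vertex measure μ, let h, f : V → ℝ satisfy h ≤ 0 with min_{i∈V}(-h_i) > 0 and f > 0, let λ ∈ ℝ, and assume 1 ≤ α ≤ p ≤ q. Let M = {u : V → ℝ : (1/q)·∫_V h·u^q dμ = -1} and E(u) = (1/p)·∫_V|∇u|^p dμ - (λ/α)·∫_V f·u^α dμ. Then the infimum β = inf{E(u) : u ∈ M, u ≥ 0, u ≢ 0} is attained: there exists û ∈ M with û ≥ 0 and û not identically zero such that E(û) = β. -/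
open Finset

/-- The infimum `β = inf{E(u) : u ∈ M, u ≥ 0, u ≢ 0}` over the constraint set
`M = {u : (1/q)∫_V h u^q dμ = -1}` is attained at some `uhat ∈ M`, `uhat ≥ 0`, `uhat ≢ 0`. -/
theorem energy_infimum_attained
    {V : Type*} [Fintype V] [Nonempty V]
    (G : SimpleGraph V) [DecidableRel G.Adj] (hconn : G.Connected)
    (w : V → V → ℝ) (hwsymm : ∀ i j, w i j = w j i)
    (hwpos : ∀ i j, G.Adj i j → 0 < w i j)
    (m : V → ℝ) (hm : ∀ i, 0 < m i)
    (h f : V → ℝ) (hh : ∀ i, h i ≤ 0)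
    (hhm : 0 < Finset.univ.inf' Finset.univ_nonempty (fun i => -h i))
    (hf : ∀ i, 0 < f i)
    (lam : ℝ)
    (α p q : ℝ) (hα : 1 ≤ α) (hαp : α ≤ p) (hpq : p ≤ q) :
    ∃ uhat : V → ℝ,
      (1 / q) * vInt m (fun i => h i * uhat i ^ q) = -1 ∧
      (∀ i, 0 ≤ uhat i) ∧ uhat ≠ 0 ∧
      energyE G w m p α lam f uhat
        = sInf {x : ℝ | ∃ u : V → ℝ,
            (1 / q) * vInt m (fun i => h i * u i ^ q) = -1 ∧
            (∀ i, 0 ≤ u i) ∧ u ≠ 0 ∧ energyE G w m p α lam f u = x} := by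

  have hq0 : (0:ℝ) < q := lt_of_lt_of_le one_pos (le_trans (le_trans hα hαp) hpq)
  have hp0 : (0:ℝ) < p := lt_of_lt_of_le one_pos (le_trans hα hαp)
  have hα0 : (0:ℝ) < α := lt_of_lt_of_le one_pos hα
  have hhneg : ∀ i, 0 < -h i := fun i =>
    lt_of_lt_of_le hhm (Finset.inf'_le _ (Finset.mem_univ i))
  set E := energyE G w m p α lam f with hE
  set S : Set (V → ℝ) :=
    {u | (1 / q) * vInt m (fun i => h i * u i ^ q) = -1 ∧ ∀ i, 0 ≤ u i} with hSdef
  have hrpow : ∀ (r : ℝ), 0 < r → Continuous (fun x : ℝ => x ^ r) := fun r hr =>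
    continuous_iff_continuousAt.2 fun x => Real.continuousAt_rpow_const x r (Or.inr hr.le)
  -- continuity of constraint functional
  have hφcont : Continuous (fun u : V → ℝ => (1 / q) * vInt m (fun i => h i * u i ^ q)) := by
    apply Continuous.mul continuous_const
    apply continuous_finset_sum
    intro i _
    exact continuous_const.mul (continuous_const.mul ((hrpow q hq0).comp (continuous_apply i)))
  have hSclosed : IsClosed S := by
    have h1 : IsClosed {u : V → ℝ | (1/q) * vInt m (fun i => h i * u i ^ q) = -1} :=
      isClosed_eq hφcont continuous_const
    have h2 : IsClosed {u : V → ℝ | ∀ i, 0 ≤ u i} := by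
      have : {u : V → ℝ | ∀ i, 0 ≤ u i} = ⋂ i, {u : V → ℝ | 0 ≤ u i} := by
        ext u; simp
      rw [this]
      exact isClosed_iInter fun i => isClosed_le continuous_const (continuous_apply i)
    exact h1.inter h2
  -- sum identity for members of S
  have hsum : ∀ u ∈ S, ∑ j, m j * ((-h j) * u j ^ q) = q := by
    rintro u ⟨hc, -⟩
    have h1 : ∑ j, m j * (h j * u j ^ q) = -q := by
      have hc' := hc
      unfold vInt at hc'
      field_simp at hc'
      simp only [mul_assoc] at hc'
      linarith
    calc ∑ j, m j * ((-h j) * u j ^ q) = -∑ j, m j * (h j * u j ^ q) := by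
          rw [← Finset.sum_neg_distrib]
          exact Finset.sum_congr rfl fun j _ => by ring
      _ = q := by rw [h1, neg_neg]
  -- boundedness
  set C : V → ℝ := fun i => (q / (m i * (-h i))) ^ q⁻¹ with hCdef
  have hsub : S ⊆ Set.Icc 0 C := by
    intro u hu
    obtain ⟨hc, hpos⟩ := hu
    refine ⟨fun i => hpos i, fun i => ?_⟩
    have hd : 0 < m i * (-h i) := mul_pos (hm i) (hhneg i)
    have hterm : m i * ((-h i) * u i ^ q) ≤ q := by
      have hle : m i * ((-h i) * u i ^ q) ≤ ∑ j, m j * ((-h j) * u j ^ q) :=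
        Finset.single_le_sum (f := fun j => m j * ((-h j) * u j ^ q))
          (fun j _ => mul_nonneg (hm j).le
            (mul_nonneg (hhneg j).le (Real.rpow_nonneg (hpos j) q))) (Finset.mem_univ i)
      have h2 := hsum u ⟨hc, hpos⟩
      linarith
    have hdiv : u i ^ q ≤ q / (m i * (-h i)) := by
      rw [le_div_iff₀ hd]
      calc u i ^ q * (m i * (-h i)) = m i * ((-h i) * u i ^ q) := by ring
        _ ≤ q := hterm
    have hmono := Real.rpow_le_rpow (Real.rpow_nonneg (hpos i) q) hdiv
      (inv_nonneg.2 hq0.le)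
    rwa [Real.rpow_rpow_inv (hpos i) hq0.ne'] at hmono
  have hScompact : IsCompact S :=
    IsCompact.of_isClosed_subset isCompact_Icc hSclosed hsub
  -- nonemptiness
  have hSne : S.Nonempty := by
    set T0 : ℝ := ∑ j, m j * (-h j) with hT0
    have hT0pos : 0 < T0 := Finset.sum_pos
      (fun j _ => mul_pos (hm j) (hhneg j)) Finset.univ_nonempty
    set c : ℝ := (q / T0) ^ q⁻¹ with hc
    have hcq : c ^ q = q / T0 :=
      Real.rpow_inv_rpow (div_nonneg hq0.le hT0pos.le) hq0.ne'
    refine ⟨fun _ => c, ?_, fun i => Real.rpow_nonneg (div_nonneg hq0.le hT0pos.le) _⟩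
    unfold vInt
    have h1 : ∑ j, m j * (h j * c ^ q) = -q := by
      calc ∑ j, m j * (h j * c ^ q) = ∑ j, -(q / T0) * (m j * (-h j)) :=
            Finset.sum_congr rfl fun j _ => by rw [hcq]; ring
        _ = -(q / T0) * T0 := by rw [← Finset.mul_sum, hT0]
        _ = -q := by field_simp
    rw [h1]
    field_simp
  -- continuity of E
  have hEcont : Continuous E := by
    rw [hE]
    unfold energyE gradEnergy vInt
    apply Continuous.sub
    · apply Continuous.mul continuous_const
      apply Continuous.mul continuous_const
      apply continuous_finset_sum
      intro i _
      apply continuous_finset_sum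
      intro j _
      exact continuous_const.mul
        ((hrpow p hp0).comp ((continuous_apply j).sub (continuous_apply i)).abs)
    · apply Continuous.mul continuous_const
      apply continuous_finset_sum
      intro i _
      exact continuous_const.mul
        (continuous_const.mul ((hrpow α hα0).comp (continuous_apply i)))
  obtain ⟨u₀, hu₀, hmin⟩ := hScompact.exists_isMinOn hSne hEcont.continuousOn
  have hne : ∀ u ∈ S, u ≠ 0 := by
    rintro u ⟨hc, -⟩ rfl
    simp only [vInt, Pi.zero_apply, Real.zero_rpow hq0.ne', mul_zero,
      Finset.sum_const_zero] at hc
    norm_num at hc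
  have hset : {x : ℝ | ∃ u : V → ℝ,
      (1 / q) * vInt m (fun i => h i * u i ^ q) = -1 ∧
      (∀ i, 0 ≤ u i) ∧ u ≠ 0 ∧ energyE G w m p α lam f u = x} = E '' S := by
    ext x
    constructor
    · rintro ⟨u, h1, h2, h3, h4⟩
      exact ⟨u, ⟨h1, h2⟩, h4⟩
    · rintro ⟨u, huS, h4⟩
      exact ⟨u, huS.1, huS.2, hne u huS, h4⟩
  refine ⟨u₀, hu₀.1, hu₀.2, hne u₀ hu₀, ?_⟩
  rw [hset]
  symm
  apply IsLeast.csInf_eq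
  refine ⟨⟨u₀, hu₀, rfl⟩, ?_⟩
  rintro x ⟨u, huS, rfl⟩
  exact hmin huS
end
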